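/- Fix an integer n ≥ 2, set b := -n + i, and let D = {0, m} with 2 ≤ m ≤ n². Let (α_j)_{j≥1} be a sequence with α_j ∈ {0, m, -m} for all j, set α := π((α_j)), and assume the radix expansion of α in base (b, {0, ±m}) is unique: for every sequence (β_j)_{j≥1} with β_j ∈ {0, m, -m} and π((β_j)) = α, one has β_j = α_j for all j. Let γ_j := min(D ∩ (D + α_j)) for each j, γ := π((γ_j)), and C(α) := C_{n,D} ∩ (C_{n,D} + α). Suppose there exist N ≥ 1 and maps f_1, …, f_N : ℂ → ℂ, each Lipschitz with some constant strictly less than 1, such that C(α) = ⋃_{i=1}^N f_i(C(α)), and such that f_1(z) = r z + (1 − r)γ for some r ∈ ℂ with 0 < |r| < 1. Then the sequence (m − |α_j|)_{j≥1} is strongly eventually periodic (SEP). -/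

import Mathlib

open Complex Filter Pointwise

/-- `piSum b d = ∑_{j≥1} d_j b^{-j}` (0-indexed: `d j` is the `(j+1)`-st digit). -/
noncomputable def piSum (b : ℂ) (d : ℕ → ℤ) : ℂ :=
  ∑' j : ℕ, (d j : ℂ) * b ^ (-((j : ℤ) + 1))

/-- The restricted digit set `C_{n,D}`. -/
def restrictedDigitSet (n : ℕ) (D : Set ℤ) : Set ℂ :=
  {z | ∃ d : ℕ → ℤ, (∀ j, d j ∈ D) ∧ z = piSum (-(n : ℂ) + Complex.I) d}

/-- A sequence `(a_j)_{j≥1}` of integers (0-indexed here) is strongly eventually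
periodic. -/
def SEPSeq (a : ℕ → ℤ) : Prop :=
  ∃ p : ℕ, 0 < p ∧ ∃ bs cs : ℕ → ℤ, (∀ ℓ, 0 ≤ cs ℓ) ∧
    (∀ j < p, a j = bs j) ∧ (∀ j, p ≤ j → a j = bs (j % p) + cs (j % p))

/-! Since the `{0, ±m}`-expansion of `π(α)` is unique, every point of `C(α)` is `π(γ) + π(δ)`
with `{0, m}`-digits `δ` supported on the zero set `Z` of `α` (and `γ = max α 0`); as the base
has modulus `> 2`, such a `δ` is determined by the point. The map `f₁` sends `π(γ) + v` to
`π(γ) + r v`, so for every `j ∈ Z` the number `r m b^{-(j+1)}` has such an expansion `δ_j`.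
Since `r ∉ {0, 1}`, the expansion `δ_{j₀}` for the least `j₀ ∈ Z` has a digit at some `i₀ > j₀`,
and by uniqueness `δ_j` is `δ_{j₀}` shifted by `j - j₀`. Hence `Z + (i₀ - j₀) ⊆ Z`, and
`m - |α_j|`, which is `m` times the indicator of `Z`, is strongly eventually periodic. -/

section PiSum

variable {b : ℂ}

lemma norm_intCast_mul_zpow (d : ℤ) (j : ℕ) :
    ‖(d : ℂ) * b ^ (-((j : ℤ) + 1))‖ = |(d : ℝ)| * ‖b‖⁻¹ ^ (j + 1) := by
  rw [norm_mul, Complex.norm_intCast, norm_zpow, zpow_neg, ← inv_zpow]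
  norm_cast

lemma norm_intCast_mul_zpow_le {d M : ℤ} (hd : |d| ≤ M) (j : ℕ) :
    ‖(d : ℂ) * b ^ (-((j : ℤ) + 1))‖ ≤ M * ‖b‖⁻¹ * ‖b‖⁻¹ ^ j := by
  rw [norm_intCast_mul_zpow, pow_succ', ← mul_assoc]
  gcongr
  rw [← Int.cast_abs]
  exact_mod_cast hd

lemma summable_piSum (hb : 1 < ‖b‖) {d : ℕ → ℤ} {M : ℤ} (hd : ∀ j, |d j| ≤ M) :
    Summable fun j : ℕ => (d j : ℂ) * b ^ (-((j : ℤ) + 1)) :=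
  .of_norm_bounded ((summable_geometric_of_lt_one (by positivity)
    (inv_lt_one_of_one_lt₀ hb)).mul_left _) fun j => norm_intCast_mul_zpow_le (hd j) j

lemma norm_piSum_le (hb : 1 < ‖b‖) {d : ℕ → ℤ} {M : ℤ} (hd : ∀ j, |d j| ≤ M) :
    ‖piSum b d‖ ≤ M / (‖b‖ - 1) := by
  have hq : ‖b‖⁻¹ < 1 := inv_lt_one_of_one_lt₀ hb
  have hgeo := summable_geometric_of_lt_one (by positivity) hq
  calc ‖piSum b d‖ ≤ ∑' j : ℕ, M * ‖b‖⁻¹ * ‖b‖⁻¹ ^ j :=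
        tsum_of_norm_bounded (hgeo.mul_left _).hasSum fun j =>
          norm_intCast_mul_zpow_le (hd j) j
    _ = M / (‖b‖ - 1) := by
        rw [tsum_mul_left, tsum_geometric_of_lt_one (by positivity) hq]
        field_simp

lemma piSum_add (hb : 1 < ‖b‖) {d e : ℕ → ℤ} {M M' : ℤ} (hd : ∀ j, |d j| ≤ M)
    (he : ∀ j, |e j| ≤ M') : piSum b (d + e) = piSum b d + piSum b e := by
  rw [piSum, piSum, piSum, ← (summable_piSum hb hd).tsum_add (summable_piSum hb he)]
  push_cast [Pi.add_apply, add_mul]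
  rfl

lemma piSum_sub (hb : 1 < ‖b‖) {d e : ℕ → ℤ} {M M' : ℤ} (hd : ∀ j, |d j| ≤ M)
    (he : ∀ j, |e j| ≤ M') : piSum b (d - e) = piSum b d - piSum b e := by
  rw [piSum, piSum, piSum, ← (summable_piSum hb hd).tsum_sub (summable_piSum hb he)]
  push_cast [Pi.sub_apply, sub_mul]
  rfl

lemma piSum_single (j : ℕ) (c : ℤ) :
    piSum b (Pi.single j c) = c * b ^ (-((j : ℤ) + 1)) := by
  rw [piSum, tsum_eq_single j fun t ht => by simp [ht]]
  simp

lemma piSum_eq_sum_range_add (hb : 1 < ‖b‖) {d : ℕ → ℤ} {M : ℤ} (hd : ∀ j, |d j| ≤ M)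
    (s : ℕ) :
    piSum b d = ∑ i ∈ Finset.range s, (d i : ℂ) * b ^ (-((i : ℤ) + 1)) +
      b ^ (-(s : ℤ)) * piSum b (fun t => d (t + s)) := by
  have hb0 : b ≠ 0 := norm_pos_iff.1 (by linarith)
  rw [piSum, ← (summable_piSum hb hd).sum_add_tsum_nat_add s, piSum, ← tsum_mul_left]
  congr 1
  refine tsum_congr fun t => ?_
  rw [mul_left_comm, ← zpow_add₀ hb0]
  push_cast
  ring_nf

lemma piSum_shift (hb : 1 < ‖b‖) {d : ℕ → ℤ} {M : ℤ} (hd : ∀ j, |d j| ≤ M) (k : ℕ) :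
    piSum b (fun t => if k ≤ t then d (t - k) else 0) = b ^ (-(k : ℤ)) * piSum b d := by
  have hM : 0 ≤ M := (abs_nonneg _).trans (hd 0)
  rw [piSum_eq_sum_range_add hb (M := M) (fun t => by split_ifs <;> simp [hd, hM]) k,
    Finset.sum_eq_zero fun i hi => by simp [(Finset.mem_range.1 hi).not_ge], zero_add]
  simp

/-- In a base of norm `> 2` the leading nonzero digit outweighs the whole tail. -/
lemma eq_zero_of_piSum_eq_zero (hb : 2 < ‖b‖) {c : ℕ → ℤ} {m : ℤ}
    (hc : ∀ j, c j ∈ ({0, m, -m} : Set ℤ)) (h : piSum b c = 0) : c = 0 := by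
  have hb1 : 1 < ‖b‖ := by linarith
  have hcm : ∀ j, |c j| ≤ |m| := fun j => by
    obtain h | h | h : c j = 0 ∨ c j = m ∨ c j = -m := hc j <;> simp [h]
  by_contra hne
  have hex : ∃ j, c j ≠ 0 := by simpa [funext_iff] using hne
  set ℓ := Nat.find hex
  have hℓ : |c ℓ| = |m| := by
    obtain h | h | h : c ℓ = 0 ∨ c ℓ = m ∨ c ℓ = -m := hc ℓ
    · exact absurd h (Nat.find_spec hex)
    all_goals simp [h]
  have hhead : ∑ i ∈ Finset.range (ℓ + 1), (c i : ℂ) * b ^ (-((i : ℤ) + 1)) =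
      (c ℓ : ℂ) * b ^ (-((ℓ : ℤ) + 1)) := by
    rw [Finset.sum_range_succ, Finset.sum_eq_zero fun i hi => by
      simp [not_not.1 (Nat.find_min hex (Finset.mem_range.1 hi))], zero_add]
  rw [piSum_eq_sum_range_add hb1 hcm (ℓ + 1), hhead] at h
  have hlead : (c ℓ : ℂ) = -piSum b (fun t => c (t + (ℓ + 1))) := by
    have hz : b ^ (-((ℓ : ℤ) + 1)) ≠ 0 := zpow_ne_zero _ (norm_pos_iff.1 (by linarith))
    push_cast at h
    apply mul_right_cancel₀ hz
    linear_combination h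
  have hbound := norm_piSum_le hb1 (fun t => hcm (t + (ℓ + 1)))
  rw [← norm_neg, ← hlead, Complex.norm_intCast, ← Int.cast_abs, hℓ,
    le_div_iff₀ (by linarith)] at hbound
  have hm : (0 : ℝ) < |(m : ℝ)| := by
    rw [← Int.cast_abs, ← hℓ]
    exact_mod_cast abs_pos.2 (Nat.find_spec hex)
  push_cast at hbound
  nlinarith

lemma eq_of_piSum_eq (hb : 2 < ‖b‖) {d e : ℕ → ℤ} {m : ℤ}
    (hd : ∀ j, d j ∈ ({0, m} : Set ℤ)) (he : ∀ j, e j ∈ ({0, m} : Set ℤ))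
    (h : piSum b d = piSum b e) : d = e := by
  have habs : ∀ x : ℤ, x ∈ ({0, m} : Set ℤ) → |x| ≤ |m| := fun x hx => by
    obtain h | h : x = 0 ∨ x = m := hx <;> simp [h]
  refine sub_eq_zero.1 (eq_zero_of_piSum_eq_zero hb (m := m) (fun j => ?_) ?_)
  · obtain h | h : d j = 0 ∨ d j = m := hd j <;>
      obtain h' | h' : e j = 0 ∨ e j = m := he j <;> simp [h, h']
  · rw [piSum_sub (by linarith) (fun j => habs _ (hd j)) (fun j => habs _ (he j)), h, sub_self]

end PiSum

lemma sepSeq_indicator {Z : Set ℕ} {p : ℕ} (hp : 0 < p) (hZ : ∀ j ∈ Z, j + p ∈ Z) {c : ℤ}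
    (hc : 0 ≤ c) : SEPSeq (Z.indicator fun _ => c) := by
  classical
  set R : ℕ → Prop := fun ρ => ∃ w ∈ Z, w % p = ρ
  have hclosed : ∀ w ∈ Z, ∀ j, w ≤ j → j % p = w % p → j ∈ Z := by
    intro w hw j hwj hmod
    obtain ⟨k, hk⟩ : p ∣ j - w := (Nat.modEq_iff_dvd' hwj).1 hmod.symm
    have hiter : ∀ k, w + p * k ∈ Z := fun k => by
      induction k with
      | zero => simpa
      | succ k ih => simpa [mul_add, ← add_assoc] using hZ _ ih
    rw [show j = w + p * k by omega]
    exact hiter k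
  obtain ⟨K, hK⟩ : ∃ K, ∀ ρ : Fin p, R ρ → ∃ w ∈ Z, w % p = ρ ∧ w ≤ K := by
    refine (eventually_all.2 fun ρ => ?_).exists (f := atTop)
    by_cases h : R ρ
    · obtain ⟨w, hw, hwρ⟩ := h
      filter_upwards [eventually_ge_atTop w] with K hK _ using ⟨w, hw, hwρ, hK⟩
    · exact Eventually.of_forall fun _ h' => absurd h' h
  have hmem : ∀ j, K < j → (j ∈ Z ↔ R (j % p)) := by
    refine fun j hj => ⟨fun h => ⟨j, h, rfl⟩, fun h => ?_⟩
    obtain ⟨w, hw, hwρ, hwK⟩ := hK ⟨j % p, Nat.mod_lt _ hp⟩ h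
    exact hclosed w hw j (by omega) hwρ.symm
  refine ⟨p * (K + 1), by positivity, Z.indicator fun _ => c,
    fun ℓ => (if R (ℓ % p) then c else 0) - Z.indicator (fun _ => c) ℓ, fun ℓ => ?_,
    fun _ _ => rfl, fun j hj => ?_⟩
  · by_cases h : ℓ ∈ Z
    · simp [h, show R (ℓ % p) from ⟨ℓ, h, rfl⟩]
    · simp only [Set.indicator_of_notMem h, sub_zero]
      split_ifs <;> omega
  · have hKj : K < j := by nlinarith
    rw [add_sub_cancel, Nat.mod_mul_right_mod, Set.indicator_apply,
      if_congr (hmem j hKj) rfl rfl]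

section Period

variable {b r : ℂ} {m : ℤ}

lemma exists_digit_ne_of_mul_eq_piSum (hb : b ≠ 0) (hm : m ≠ 0) (hr0 : r ≠ 0) (hr1 : r ≠ 1)
    {δ : ℕ → ℤ} (hδ : ∀ t, δ t ∈ ({0, m} : Set ℤ)) {j : ℕ}
    (h : r * (m * b ^ (-((j : ℤ) + 1))) = piSum b δ) : ∃ i ≠ j, δ i ≠ 0 := by
  by_contra! hδj
  have hsingle : δ = Pi.single j (δ j) :=
    funext fun t => by by_cases ht : t = j <;> simp [ht, hδj]
  rw [hsingle, piSum_single, ← mul_assoc] at h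
  have hrm := mul_right_cancel₀ (zpow_ne_zero _ hb) h
  obtain h' | h' : δ j = 0 ∨ δ j = m := hδ j
  · simp [h', hm, hr0] at hrm
  · rw [h'] at hrm
    exact hr1 (by simpa [hm] using hrm)

lemma exists_add_mem_of_mul_eq_piSum (hb : 2 < ‖b‖) (hm : m ≠ 0) (hr0 : r ≠ 0) (hr1 : r ≠ 1)
    {Z : Set ℕ} (hZ : ∀ j ∈ Z, ∃ δ : ℕ → ℤ, (∀ t, δ t ∈ ({0, m} : Set ℤ)) ∧
      (∀ t ∉ Z, δ t = 0) ∧ r * (m * b ^ (-((j : ℤ) + 1))) = piSum b δ) :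
    ∃ p, 0 < p ∧ ∀ j ∈ Z, j + p ∈ Z := by
  classical
  rcases Z.eq_empty_or_nonempty with rfl | hne
  · exact ⟨1, one_pos, fun j hj => hj.elim⟩
  have hb1 : 1 < ‖b‖ := by linarith
  have hb0 : b ≠ 0 := norm_pos_iff.1 (by linarith)
  obtain ⟨j₀, hj₀, hmin⟩ : ∃ j₀ ∈ Z, ∀ j ∈ Z, j₀ ≤ j :=
    ⟨Nat.find hne, Nat.find_spec hne, fun j hj => Nat.find_min' hne hj⟩
  obtain ⟨δ, hδ, hδZ, hδeq⟩ := hZ j₀ hj₀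
  obtain ⟨i₀, hi₀j₀, hi₀⟩ := exists_digit_ne_of_mul_eq_piSum hb0 hm hr0 hr1 hδ hδeq
  have hi₀Z : i₀ ∈ Z := by_contra fun h => hi₀ (hδZ _ h)
  have hlt : j₀ < i₀ := (hmin _ hi₀Z).lt_of_ne hi₀j₀.symm
  refine ⟨i₀ - j₀, by omega, fun j hj => ?_⟩
  obtain ⟨δ', hδ', hδ'Z, hδ'eq⟩ := hZ j hj
  have hj₀j := hmin j hj
  have hshift : (fun t => if j - j₀ ≤ t then δ (t - (j - j₀)) else 0) = δ' := by
    refine eq_of_piSum_eq hb (m := m) (fun t => ?_) hδ' ?_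
    · split_ifs
      exacts [hδ _, Or.inl rfl]
    · have hδm : ∀ t, |δ t| ≤ |m| := fun t => by
        obtain h | h : δ t = 0 ∨ δ t = m := hδ t <;> simp [h]
      rw [piSum_shift hb1 hδm, ← hδeq, ← hδ'eq, mul_left_comm, mul_left_comm _ (m : ℂ),
        ← zpow_add₀ hb0]
      push_cast [Nat.cast_sub hj₀j]
      ring_nf
  have hdigit := congrFun hshift (i₀ + (j - j₀))
  rw [if_pos (Nat.le_add_left _ _), Nat.add_sub_cancel] at hdigit
  rw [show j + (i₀ - j₀) = i₀ + (j - j₀) by omega]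
  exact by_contra fun h => hi₀ (hdigit.trans (hδ'Z _ h))

end Period

lemma two_lt_norm_neg_natCast_add_I {n : ℕ} (hn : 2 ≤ n) : 2 < ‖-(n : ℂ) + I‖ := by
  have hsq : ‖-(n : ℂ) + I‖ ^ 2 = (n : ℝ) ^ 2 + 1 := by
    rw [Complex.sq_norm, Complex.normSq_apply]
    simp [sq]
  have : (2 : ℝ) ≤ n := by exact_mod_cast hn
  nlinarith [norm_nonneg (-(n : ℂ) + I)]

lemma isLeast_inter_add_singleton {m a : ℤ} (hm : 0 ≤ m) (ha : a ∈ ({0, m, -m} : Set ℤ)) :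
    IsLeast (({0, m} : Set ℤ) ∩ (({0, m} : Set ℤ) + {a})) (max a 0) := by
  simp only [Set.add_singleton, Set.image_insert_eq, Set.image_singleton]
  obtain rfl | rfl | rfl := ha <;> simp [IsLeast, lowerBounds] <;> omega

section DigitSet

variable {n : ℕ} {m : ℤ} {α : ℕ → ℤ}

lemma mem_restrictedDigitSet_inter_add_iff (hB : 1 < ‖-(n : ℂ) + I‖) (hm : 0 ≤ m)
    (hα : ∀ j, α j ∈ ({0, m, -m} : Set ℤ))
    (huniq : ∀ β : ℕ → ℤ, (∀ j, β j ∈ ({0, m, -m} : Set ℤ)) →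
      piSum (-(n : ℂ) + I) β = piSum (-(n : ℂ) + I) α → ∀ j, β j = α j) {z : ℂ} :
    z ∈ restrictedDigitSet n {0, m} ∩
        (restrictedDigitSet n {0, m} + {piSum (-(n : ℂ) + I) α}) ↔
      ∃ δ : ℕ → ℤ, (∀ t, δ t ∈ ({0, m} : Set ℤ)) ∧ (∀ t, α t ≠ 0 → δ t = 0) ∧
        z = piSum (-(n : ℂ) + I) (fun t => max (α t) 0) + piSum (-(n : ℂ) + I) δ := by
  have habs : ∀ {x : ℤ}, x ∈ ({0, m} : Set ℤ) → |x| ≤ m := fun hx => by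
    obtain h | h : _ = 0 ∨ _ = m := hx <;> rw [abs_le] <;> omega
  have hαm : ∀ t, |α t| ≤ m := fun t => by
    obtain h | h | h : α t = 0 ∨ α t = m ∨ α t = -m := hα t <;> rw [abs_le] <;> omega
  have hαpos : ∀ t, |max (α t) 0| ≤ m := fun t => by
    obtain h | h | h : α t = 0 ∨ α t = m ∨ α t = -m := hα t <;> rw [abs_le] <;> omega
  simp only [restrictedDigitSet, Set.add_singleton, Set.mem_inter_iff, Set.mem_image]
  constructor
  · rintro ⟨⟨d, hd, rfl⟩, _, ⟨e, he, rfl⟩, hde⟩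
    have hdα : ∀ t, d t - e t = α t := huniq (d - e)
      (fun t => by
        obtain h | h : d t = 0 ∨ d t = m := hd t <;>
          obtain h' | h' : e t = 0 ∨ e t = m := he t <;> simp [h, h'])
      (by
        rw [piSum_sub hB (fun t => habs (hd t)) (fun t => habs (he t))]
        linear_combination -hde)
    have hdigit : ∀ t, d t - max (α t) 0 ∈ ({0, m} : Set ℤ) ∧
        (α t ≠ 0 → d t - max (α t) 0 = 0) := fun t => by
      have := hdα t
      obtain h | h : d t = 0 ∨ d t = m := hd t <;>
        obtain h' | h' : e t = 0 ∨ e t = m := he t <;>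
        simp only [Set.mem_insert_iff, Set.mem_singleton_iff] <;> omega
    refine ⟨d - fun t => max (α t) 0, fun t => (hdigit t).1, fun t => (hdigit t).2, ?_⟩
    rw [piSum_sub hB (fun t => habs (hd t)) hαpos]
    ring
  · rintro ⟨δ, hδ, hδα, rfl⟩
    have hdigit : ∀ t, max (α t) 0 + δ t ∈ ({0, m} : Set ℤ) ∧
        max (α t) 0 - α t + δ t ∈ ({0, m} : Set ℤ) := fun t => by
      by_cases h0 : α t = 0
      · simpa [h0] using hδ t
      · obtain h | h | h : α t = 0 ∨ α t = m ∨ α t = -m := hα t <;>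
          simp [h, hδα t h0, hm]
    refine ⟨⟨fun t => max (α t) 0 + δ t, fun t => (hdigit t).1,
        (piSum_add hB hαpos fun t => habs (hδ t)).symm⟩,
      _, ⟨fun t => max (α t) 0 - α t + δ t, fun t => (hdigit t).2, rfl⟩, ?_⟩
    rw [← piSum_add hB (fun t => habs (hdigit t).2) hαm,
      ← piSum_add hB hαpos fun t => habs (hδ t)]
    congr 1
    funext t
    simp only [Pi.add_apply]
    ring

end DigitSet

theorem stmt_16_general (n : ℕ) (hn : 2 ≤ n) (m : ℤ) (hm : 2 ≤ m ∧ m ≤ (n : ℤ) ^ 2)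
    (α : ℕ → ℤ) (hα : ∀ j, α j ∈ ({0, m, -m} : Set ℤ))
    (huniq : ∀ β : ℕ → ℤ, (∀ j, β j ∈ ({0, m, -m} : Set ℤ)) →
      piSum (-(n : ℂ) + Complex.I) β = piSum (-(n : ℂ) + Complex.I) α →
      ∀ j, β j = α j)
    (γ : ℕ → ℤ)
    (hγ : ∀ j, IsLeast (({0, m} : Set ℤ) ∩ (({0, m} : Set ℤ) + {α j})) (γ j))
    (Cα : Set ℂ)
    (hCα : Cα = restrictedDigitSet n {0, m} ∩
      (restrictedDigitSet n {0, m} + {piSum (-(n : ℂ) + Complex.I) α}))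
    (N : ℕ) (hN : 1 ≤ N) (f : Fin N → ℂ → ℂ)
    (hattr : Cα = ⋃ i : Fin N, f i '' Cα)
    (r : ℂ) (hr : 0 < ‖r‖ ∧ ‖r‖ < 1)
    (hf0 : f ⟨0, hN⟩ = fun z =>
      r * z + (1 - r) * piSum (-(n : ℂ) + Complex.I) γ) :
    SEPSeq (fun j => m - |α j|) := by
  have hB := two_lt_norm_neg_natCast_add_I hn
  have hm0 : 0 < m := by omega
  obtain rfl : γ = fun t => max (α t) 0 :=
    funext fun t => (hγ t).unique (isLeast_inter_add_singleton hm0.le (hα t))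
  have hmem (z : ℂ) :=
    hCα ▸ mem_restrictedDigitSet_inter_add_iff (by linarith) hm0.le hα huniq (z := z)
  have hmaps : ∀ z ∈ Cα, f ⟨0, hN⟩ z ∈ Cα := fun z hz =>
    hattr ▸ Set.mem_iUnion.2 ⟨_, Set.mem_image_of_mem _ hz⟩
  have hr1 : r ≠ 1 := by rintro rfl; simp at hr
  obtain ⟨p, hp, hZ⟩ := exists_add_mem_of_mul_eq_piSum hB hm0.ne' (norm_pos_iff.1 hr.1) hr1
    (Z := {j | α j = 0}) fun j hj => by
      have hins := (hmem _).2 ⟨Pi.single j m, fun t => ?_, fun t ht => ?_, rfl⟩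
      · obtain ⟨δ, hδ, hδα, hδeq⟩ := (hmem _).1 (hmaps _ hins)
        refine ⟨δ, hδ, hδα, ?_⟩
        rw [hf0, piSum_single] at hδeq
        linear_combination hδeq
      · by_cases ht : t = j <;> simp [ht]
      · simp [show t ≠ j by rintro rfl; exact ht hj]
  convert sepSeq_indicator hp hZ hm0.le using 1
  funext j
  obtain h | h | h : α j = 0 ∨ α j = m ∨ α j = -m := hα j <;>
    simp [h, abs_of_pos hm0, hm0.ne']

theorem stmt_16 (n : ℕ) (hn : 2 ≤ n) (m : ℤ) (hm : 2 ≤ m ∧ m ≤ (n : ℤ) ^ 2)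
    (α : ℕ → ℤ) (hα : ∀ j, α j ∈ ({0, m, -m} : Set ℤ))
    (huniq : ∀ β : ℕ → ℤ, (∀ j, β j ∈ ({0, m, -m} : Set ℤ)) →
      piSum (-(n : ℂ) + Complex.I) β = piSum (-(n : ℂ) + Complex.I) α →
      ∀ j, β j = α j)
    (γ : ℕ → ℤ)
    (hγ : ∀ j, IsLeast (({0, m} : Set ℤ) ∩ (({0, m} : Set ℤ) + {α j})) (γ j))
    (Cα : Set ℂ)
    (hCα : Cα = restrictedDigitSet n {0, m} ∩
      (restrictedDigitSet n {0, m} + {piSum (-(n : ℂ) + Complex.I) α}))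
    (N : ℕ) (hN : 1 ≤ N) (f : Fin N → ℂ → ℂ)
    (hLip : ∀ i, ∃ c : NNReal, c < 1 ∧ LipschitzWith c (f i))
    (hattr : Cα = ⋃ i : Fin N, f i '' Cα)
    (r : ℂ) (hr : 0 < ‖r‖ ∧ ‖r‖ < 1)
    (hf0 : f ⟨0, hN⟩ = fun z =>
      r * z + (1 - r) * piSum (-(n : ℂ) + Complex.I) γ) :
    SEPSeq (fun j => m - |α j|) :=
  stmt_16_general n hn m hm α hα huniq γ hγ Cα hCα N hN f hattr r hr hf0
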